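/- Let $g$ be an impact graph with positive probability for a max-linear Bayesian network with Kleene star $C^\ast$. If $j\to i\in g$, then for every $k\in V$, the edge $i\to k$ is not in $g$. Consequently, every tree in the forest $g$ has height at most one, i.e., $g$ is a galaxy (a forest of stars). -/

import Mathlib

open scoped NNReal

noncomputable section

open MeasureTheory ProbabilityTheory

/-- Max-times matrix-vector product: `(A ⊙ x) i = max_j (A i j * x j)`. -/
def maxMul {d : ℕ} (A : Matrix (Fin d) (Fin d) ℝ≥0) (x : Fin d → ℝ≥0) : Fin d → ℝ≥0 :=
  fun i => Finset.univ.sup fun j => A i j * x j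

/-- Max-times matrix product. -/
def maxMatMul {d : ℕ} (A B : Matrix (Fin d) (Fin d) ℝ≥0) : Matrix (Fin d) (Fin d) ℝ≥0 :=
  Matrix.of fun i j => Finset.univ.sup fun l => A i l * B l j

/-- Max-times matrix powers, with `A^{⊙0}` the identity matrix. -/
def maxPow {d : ℕ} (A : Matrix (Fin d) (Fin d) ℝ≥0) : ℕ → Matrix (Fin d) (Fin d) ℝ≥0
  | 0 => Matrix.of fun i j => if i = j then 1 else 0
  | k + 1 => maxMatMul A (maxPow A k)

/-- Kleene star `C^* = I ∨ C ∨ C^{⊙2} ∨ ⋯ ∨ C^{⊙(d-1)}` over the max-times semiring. -/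
def kleene {d : ℕ} (C : Matrix (Fin d) (Fin d) ℝ≥0) : Matrix (Fin d) (Fin d) ℝ≥0 :=
  Matrix.of fun i j => (Finset.range d).sup fun k => maxPow C k i j

/-- The support digraph of `C` (edge `j → i` iff `C i j ≠ 0`) has no directed cycle. -/
def SupportAcyclic {d : ℕ} (C : Matrix (Fin d) (Fin d) ℝ≥0) : Prop :=
  ¬ ∃ (r : ℕ) (c : Fin (r + 1) → Fin d), Function.Injective c ∧ ∀ t, C (c (t + 1)) (c t) ≠ 0

/-- Edge `j → i` of the impact graph of the innovation vector `z`: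
`i ≠ j` and `X i = c^*_{ij} * z j`, where `X = C^* ⊙ z`. -/
def impactEdge {d : ℕ} (C : Matrix (Fin d) (Fin d) ℝ≥0) (z : Fin d → ℝ≥0) (i j : Fin d) : Prop :=
  i ≠ j ∧ maxMul (kleene C) z i = kleene C i j * z j

/-!
Write `X = C* ⊙ Z`. If `j → i` and `i → k` are both edges of the impact graph, then
`c*ₖᵢ X i = c*ₖᵢ c*ᵢⱼ Z j ≤ c*ₖⱼ Z j ≤ X k = c*ₖᵢ Z i`, where `c*ₖᵢ > 0` because `X k ≥ Z k > 0`.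
Hence `X i ≤ Z i`, i.e. `Z i = c*ᵢⱼ Z j`, an event of probability zero since `Z i` is atom-free and
independent of `Z j`. The middle inequality is idempotency of the Kleene star, which holds because
acyclicity makes `C^{⊙m}` vanish for `m ≥ d`: a walk of length `m` in the support of `C` visits
`m + 1` distinct nodes, as a repeated node would close a cycle.
-/

section

variable {d : ℕ} (C : Matrix (Fin d) (Fin d) ℝ≥0)

def IsSupportWalk (p : ℕ → Fin d) (n : ℕ) : Prop :=
  ∀ t < n, C (p (t + 1)) (p t) ≠ 0

variable {C}

lemma IsSupportWalk.shift {p : ℕ → Fin d} {n a m : ℕ} (hp : IsSupportWalk C p n)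
    (h : a + m ≤ n) : IsSupportWalk C (fun t => p (a + t)) m :=
  fun t ht => hp (a + t) (by omega)

lemma IsSupportWalk.exists_closed_of_not_injective {p : ℕ → Fin d} {n k : ℕ}
    (hp : IsSupportWalk C p n) (hk : k ≤ n + 1) (hinj : ¬ Function.Injective fun t : Fin k => p t) :
    ∃ m, 0 < m ∧ m < k ∧ ∃ q, IsSupportWalk C q m ∧ q m = q 0 := by
  obtain ⟨a, b, hab, hne⟩ := Function.not_injective_iff.1 hinj
  wlog hlt : a < b generalizing a b
  · exact this b a hab.symm (Ne.symm hne) (by omega)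
  refine ⟨b - a, by omega, by omega, fun t => p (a + t), hp.shift (by omega), ?_⟩
  simp only [add_zero, Nat.add_sub_cancel' hlt.le]
  exact hab.symm

theorem SupportAcyclic.not_isSupportWalk_closed (hC : SupportAcyclic C) {p : ℕ → Fin d} {n : ℕ}
    (hp : IsSupportWalk C p n) (hn : 0 < n) : p n ≠ p 0 := by
  induction n using Nat.strong_induction_on generalizing p with
  | _ n ih =>
  intro hclosed
  by_cases hinj : Function.Injective fun u : Fin n => p u
  · obtain ⟨r, rfl⟩ : ∃ r, n = r + 1 := ⟨n - 1, by omega⟩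
    refine hC ⟨r, fun u => p u, hinj, fun u => ?_⟩
    show C (p ((u + 1 : Fin (r + 1)) : ℕ)) (p u) ≠ 0
    have hnext : p ((u + 1 : Fin (r + 1)) : ℕ) = p (u + 1) := by
      rw [Fin.val_add_one]
      split_ifs with hu
      · rw [hu, Fin.val_last, hclosed]
      · rfl
    rw [hnext]
    exact hp u u.isLt
  · obtain ⟨m, hm, hmn, q, hq, hqm⟩ := hp.exists_closed_of_not_injective (by omega) hinj
    exact ih m hmn hq hm hqm

theorem SupportAcyclic.injective_of_isSupportWalk (hC : SupportAcyclic C) {p : ℕ → Fin d}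
    {n : ℕ} (hp : IsSupportWalk C p n) : Function.Injective fun t : Fin (n + 1) => p t := by
  by_contra hinj
  obtain ⟨m, hm, hmn, q, hq, hqm⟩ := hp.exists_closed_of_not_injective le_rfl hinj
  exact hC.not_isSupportWalk_closed hq hm hqm

lemma maxPow_mul_le_maxPow_add (a b : ℕ) (i l j : Fin d) :
    maxPow C a i l * maxPow C b l j ≤ maxPow C (a + b) i j := by
  induction a generalizing i with
  | zero =>
    by_cases h : i = l
    · subst h; simp [maxPow]
    · simp [maxPow, h]
  | succ a ih =>
    obtain ⟨m, -, hm⟩ := Finset.exists_mem_eq_sup Finset.univ ⟨i, Finset.mem_univ i⟩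
      (fun m => C i m * maxPow C a m l)
    rw [show a + 1 + b = a + b + 1 by omega]
    calc maxPow C (a + 1) i l * maxPow C b l j
        = C i m * (maxPow C a m l * maxPow C b l j) := by rw [← mul_assoc]; exact congrArg (· * _) hm
      _ ≤ C i m * maxPow C (a + b) m j := mul_le_mul_right (ih m) _
      _ ≤ maxPow C (a + b + 1) i j :=
          Finset.le_sup (f := fun l => C i l * maxPow C (a + b) l j) (Finset.mem_univ m)

lemma exists_isSupportWalk_of_maxPow_ne_zero {m : ℕ} {i j : Fin d} (h : maxPow C m i j ≠ 0) :
    ∃ p : ℕ → Fin d, p 0 = j ∧ p m = i ∧ IsSupportWalk C p m := by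
  induction m generalizing i with
  | zero =>
    have hij : i = j := by
      by_contra hij; exact h (by simp [maxPow, hij])
    exact ⟨fun _ => j, rfl, hij.symm, fun t ht => absurd ht (Nat.not_lt_zero t)⟩
  | succ m ih =>
    obtain ⟨l, hl⟩ : ∃ l, C i l * maxPow C m l j ≠ 0 := by
      by_contra! hall
      exact h ((Finset.sup_eq_bot_iff _ Finset.univ).2 fun l _ => hall l)
    obtain ⟨p, hp0, hpm, hp⟩ := ih (right_ne_zero_of_mul hl)
    refine ⟨fun t => if t = m + 1 then i else p t, by simp [hp0], by simp, fun t ht => ?_⟩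
    rcases Nat.lt_succ_iff_lt_or_eq.1 ht with ht | rfl
    · simpa [show t ≠ m + 1 by omega, show t ≠ m by omega] using hp t ht
    · simpa [hpm] using left_ne_zero_of_mul hl

theorem SupportAcyclic.maxPow_eq_zero (hC : SupportAcyclic C) {m : ℕ} (hm : d ≤ m)
    (i j : Fin d) : maxPow C m i j = 0 := by
  by_contra h
  obtain ⟨p, -, -, hp⟩ := exists_isSupportWalk_of_maxPow_ne_zero h
  have := Fintype.card_le_of_injective _ (hC.injective_of_isSupportWalk hp)
  simp only [Fintype.card_fin] at this
  omega

theorem SupportAcyclic.maxPow_le_kleene (hC : SupportAcyclic C) (m : ℕ) (i j : Fin d) :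
    maxPow C m i j ≤ kleene C i j := by
  by_cases h : m < d
  · exact Finset.le_sup (f := fun k => maxPow C k i j) (Finset.mem_range.2 h)
  · rw [hC.maxPow_eq_zero (not_lt.1 h)]
    exact zero_le

lemma one_le_kleene_self (i : Fin d) : 1 ≤ kleene C i i := by
  have h := Finset.le_sup (f := fun k => maxPow C k i i) (Finset.mem_range.2 i.pos)
  rwa [show maxPow C 0 i i = 1 by simp [maxPow]] at h

theorem SupportAcyclic.kleene_mul_kleene_le (hC : SupportAcyclic C) (k i j : Fin d) :
    kleene C k i * kleene C i j ≤ kleene C k j := by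
  have hne : (Finset.range d).Nonempty := ⟨0, Finset.mem_range.2 i.pos⟩
  obtain ⟨a, -, ha⟩ := Finset.exists_mem_eq_sup _ hne fun n => maxPow C n k i
  obtain ⟨b, -, hb⟩ := Finset.exists_mem_eq_sup _ hne fun n => maxPow C n i j
  calc kleene C k i * kleene C i j = maxPow C a k i * maxPow C b i j := congrArg₂ (· * ·) ha hb
    _ ≤ maxPow C (a + b) k j := maxPow_mul_le_maxPow_add a b k i j
    _ ≤ kleene C k j := hC.maxPow_le_kleene _ k j

lemma mul_le_maxMul (A : Matrix (Fin d) (Fin d) ℝ≥0) (x : Fin d → ℝ≥0) (i j : Fin d) :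
    A i j * x j ≤ maxMul A x i :=
  Finset.le_sup (f := fun l => A i l * x l) (Finset.mem_univ j)

lemma le_maxMul_kleene (z : Fin d → ℝ≥0) (i : Fin d) : z i ≤ maxMul (kleene C) z i :=
  calc z i ≤ kleene C i i * z i := le_mul_of_one_le_left zero_le (one_le_kleene_self i)
    _ ≤ maxMul (kleene C) z i := mul_le_maxMul _ z i i

theorem SupportAcyclic.eq_kleene_mul_of_maxMul_eq (hC : SupportAcyclic C) {z : Fin d → ℝ≥0}
    (hz : ∀ l, 0 < z l) {i j k : Fin d} (hi : maxMul (kleene C) z i = kleene C i j * z j)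
    (hk : maxMul (kleene C) z k = kleene C k i * z i) : z i = kleene C i j * z j := by
  set X := maxMul (kleene C) z
  have hki : 0 < kleene C k i := by
    have : 0 < X k := (hz k).trans_le (le_maxMul_kleene z k)
    exact pos_of_mul_pos_left (hk ▸ this) zero_le
  have hXi : kleene C k i * X i ≤ kleene C k i * z i :=
    calc kleene C k i * X i = kleene C k i * kleene C i j * z j := by rw [hi, mul_assoc]
      _ ≤ kleene C k j * z j := mul_le_mul_left (hC.kleene_mul_kleene_le k i j) _
      _ ≤ X k := mul_le_maxMul _ z k j
      _ = kleene C k i * z i := hk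
  exact hi ▸ le_antisymm (le_maxMul_kleene z i) (le_of_mul_le_mul_left hXi hki)

end

theorem ProbabilityTheory.IndepFun.measure_eq_comp_eq_zero {Ω α β : Type*} [MeasurableSpace Ω]
    [MeasurableSpace α] [MeasurableEq α] [MeasurableSpace β] {μ : Measure Ω} [IsFiniteMeasure μ]
    {X : Ω → α} {Y : Ω → β} (hX : Measurable X) (hY : Measurable Y) (hXY : IndepFun Y X μ)
    (hatom : ∀ a, μ {ω | X ω = a} = 0) {f : β → α} (hf : Measurable f) :
    μ {ω | X ω = f (Y ω)} = 0 := by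
  have hS : MeasurableSet {p : β × α | p.2 = f p.1} :=
    measurableSet_eq_fun measurable_snd (hf.comp measurable_fst)
  have hmap := (indepFun_iff_map_prod_eq_prod_map_map hY.aemeasurable hX.aemeasurable).1 hXY
  change μ ((fun ω => (Y ω, X ω)) ⁻¹' {p : β × α | p.2 = f p.1}) = 0
  rw [← Measure.map_apply (hY.prodMk hX) hS, hmap, Measure.prod_apply hS]
  have hfiber (y : β) : μ.map X (Prod.mk y ⁻¹' {p : β × α | p.2 = f p.1}) = 0 := by
    rw [show Prod.mk y ⁻¹' {p : β × α | p.2 = f p.1} = {f y} from rfl,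
      Measure.map_apply hX (measurableSet_singleton _)]
    exact hatom (f y)
  simp only [hfiber, lintegral_zero]

/-- The edge `j → i` of `g` is encoded as `g i j`. -/
theorem stmt7 {d : ℕ} (C : Matrix (Fin d) (Fin d) ℝ≥0) (hC : SupportAcyclic C)
    {Ω : Type*} [MeasurableSpace Ω] (μ : Measure Ω) [IsProbabilityMeasure μ]
    (Z : Fin d → Ω → ℝ≥0) (hmeas : ∀ i, Measurable (Z i))
    (hindep : iIndepFun Z μ)
    (hpos : ∀ i ω, 0 < Z i ω)
    (hatom : ∀ i (c : ℝ≥0), μ {ω | Z i ω = c} = 0)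
    (g : Fin d → Fin d → Prop)
    (hg : μ {ω | ∀ i j, impactEdge C (fun k => Z k ω) i j ↔ g i j} ≠ 0) :
    ∀ i j, g i j → ∀ k, ¬ g k i := by
  intro i j hji k hik
  obtain ⟨ω₀, hω₀⟩ := nonempty_of_measure_ne_zero hg
  have hij : i ≠ j := ((hω₀ i j).2 hji).1
  refine hg (measure_mono_null (fun ω hω => ?_) ((hindep.indepFun hij.symm).measure_eq_comp_eq_zero
    (hmeas i) (hmeas j) (hatom i) (measurable_const_mul (kleene C i j))))
  exact hC.eq_kleene_mul_of_maxMul_eq (hpos · ω) ((hω i j).2 hji).2 ((hω k i).2 hik).2
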